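/- arXiv:2006.14581 — 2 statements merged into one kernel-verified Lean document; each statement's English description precedes it below -/
import Mathlib

section
/- Korneichuk–Stechkin lemma, sharpness for concave moduli (real-valued case): Let a < a' ≤ b' < b, let ψ₁: [a,a'] → ℝ and ψ₂: [b',b] → ℝ be bounded measurable functions that are positive almost everywhere with ∫_a^{a'} ψ₁(t) dt = ∫_{b'}^{b} ψ₂(t) dt, and let ρ: [a,a'] → [b',b] satisfy ∫_a^{s} ψ₁(t) dt = ∫_{ρ(s)}^{b} ψ₂(t) dt for all s ∈ [a,a']. If ω is a concave modulus of continuity, then the supremum over all f ∈ H^ω([a,b],ℝ) of |∫_a^{a'} ψ₁(t) f(t) dt − ∫_{b'}^{b} ψ₂(t) f(t) dt| is equal to ∫_a^{a'} ψ₁(s) ω(ρ(s) − s) ds. -/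
/-!
Since `ρ` pushes the measure `ψ₁ ds` on `[a, a']` forward to `ψ₂ dt` on `[b', b]`, the change of
variables `t = ρ s` turns the functional into `∫_a^{a'} ψ₁ s (f s - f (ρ s)) ds`, which is at most
`∫_a^{a'} ψ₁ s ω (ρ s - s) ds` on `H^ω`.

For the converse, let `W` be the primitive of the difference quotient `w` of `ω` with a small
step `ε`. By concavity `w` is antitone, so `W` is concave and subadditive, and
`ω - ω ε ≤ W ≤ ω` on `[0, ∞)`. The infimal convolution
`G z = inf_{a ≤ s ≤ min z a'} (∫_a^s w (ρ u - u) du + W (z - s))` is then in `H^W ⊆ H^ω`, and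
since `ρ` is decreasing the infimum at `ρ s` is attained at `s`, so that
`G (ρ s) - G s = W (ρ s - s)` exactly. Hence the bound is attained up to `ω ε ∫ ψ₁`.
-/

open MeasureTheory Set

/-- A modulus of continuity: `ω 0 = 0`, continuous, non-decreasing and subadditive on `[0, ∞)`. -/
def IsModulus (ω : ℝ → ℝ) : Prop :=
  ω 0 = 0 ∧ ContinuousOn ω (Set.Ici 0) ∧ MonotoneOn ω (Set.Ici 0) ∧
    ∀ s t : ℝ, 0 ≤ s → 0 ≤ t → ω (s + t) ≤ ω s + ω t

/-- The class `H^ω([a,b], E)`. -/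
def HHolder {E : Type*} [NormedAddCommGroup E] (ω : ℝ → ℝ) (a b : ℝ) (f : ℝ → E) : Prop :=
  ∀ s ∈ Set.Icc a b, ∀ t ∈ Set.Icc a b, ‖f t - f s‖ ≤ ω |t - s|

open Filter Topology intervalIntegral

theorem IsModulus.tendsto_zero {ω : ℝ → ℝ} (hω : IsModulus ω) :
    Tendsto ω (𝓝[Ici 0] 0) (𝓝 0) := by
  simpa [ContinuousWithinAt, hω.1] using hω.2.1 0 self_mem_Ici

theorem HHolder.continuousOn {E : Type*} [NormedAddCommGroup E] {ω : ℝ → ℝ} {a b : ℝ}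
    {f : ℝ → E} (hω : IsModulus ω) (hf : HHolder ω a b f) : ContinuousOn f (Icc a b) := by
  intro x hx
  have hdist : Tendsto (fun y => |y - x|) (𝓝[Icc a b] x) (𝓝[Ici 0] 0) :=
    tendsto_nhdsWithin_iff.2
      ⟨((continuous_id.sub continuous_const).abs.tendsto' x 0 (by simp)).mono_left
        nhdsWithin_le_nhds, Eventually.of_forall fun _ => mem_Ici.2 (abs_nonneg _)⟩
  rw [ContinuousWithinAt, tendsto_iff_norm_sub_tendsto_zero]
  exact squeeze_zero' (Eventually.of_forall fun _ => norm_nonneg _)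
    (eventually_nhdsWithin_of_forall fun y hy => hf x hx y hy) (hω.tendsto_zero.comp hdist)

theorem StrictAntiOn.continuousOn_of_surjOn_Icc {α β : Type*} [LinearOrder α]
    [TopologicalSpace α] [OrderTopology α] [LinearOrder β] [TopologicalSpace β] [OrderTopology β]
    {f : α → β} {s : Set α} {c d : β} (hf : StrictAntiOn f s) (hmaps : MapsTo f s (Icc c d))
    (hsurj : SurjOn f s (Icc c d)) : ContinuousOn f s := by
  intro x hx
  rw [ContinuousWithinAt, tendsto_order]
  constructor
  · intro u hu
    rcases lt_or_ge u c with huc | hcu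
    · exact eventually_nhdsWithin_of_forall fun y hy => huc.trans_le (hmaps hy).1
    obtain ⟨σ, hσ, rfl⟩ := hsurj ⟨hcu, hu.le.trans (hmaps hx).2⟩
    have hxσ : x < σ := (hf.lt_iff_gt hσ hx).1 hu
    filter_upwards [self_mem_nhdsWithin, nhdsWithin_le_nhds (Iio_mem_nhds hxσ)] with y hy hyσ
    exact hf hy hσ hyσ
  · intro u hu
    rcases le_or_gt u d with hud | hdu
    · obtain ⟨σ, hσ, rfl⟩ := hsurj ⟨(hmaps hx).1.trans hu.le, hud⟩
      have hσx : σ < x := (hf.lt_iff_gt hx hσ).1 hu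
      filter_upwards [self_mem_nhdsWithin, nhdsWithin_le_nhds (Ioi_mem_nhds hσx)] with y hy hσy
      exact hf hσ hy hσy
    · exact eventually_nhdsWithin_of_forall fun y hy => (hmaps hy).2.trans_lt hdu

section Primitive

variable {ψ : ℝ → ℝ} {c d : ℝ}

theorem integrableOn_Icc_of_abs_le {C : ℝ} (hψ : Measurable ψ)
    (hC : ∀ t ∈ Icc c d, |ψ t| ≤ C) : IntegrableOn ψ (Icc c d) :=
  Measure.integrableOn_of_bounded measure_Icc_lt_top.ne hψ.aestronglyMeasurable
    (ae_restrict_of_forall_mem measurableSet_Icc hC)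

theorem MeasureTheory.IntegrableOn.intervalIntegrable_of_mem (hψ : IntegrableOn ψ (Icc c d))
    {x y : ℝ} (hx : x ∈ Icc c d) (hy : y ∈ Icc c d) : IntervalIntegrable ψ volume x y :=
  (hψ.mono_set (uIcc_subset_Icc hx hy)).intervalIntegrable

theorem integral_pos_of_ae_pos (hψ : IntegrableOn ψ (Icc c d))
    (hpos : ∀ᵐ t ∂volume.restrict (Icc c d), 0 < ψ t) {x y : ℝ} (hcx : c ≤ x) (hxy : x < y)
    (hyd : y ≤ d) : 0 < ∫ t in x..y, ψ t := by
  have hsub : Icc x y ⊆ Icc c d := Icc_subset_Icc hcx hyd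
  have hpos' : ∀ᵐ t ∂volume.restrict (Icc x y), 0 < ψ t :=
    ae_restrict_of_ae_restrict_of_subset hsub hpos
  rw [integral_of_le hxy.le, ← integral_Icc_eq_integral_Ioc,
    integral_pos_iff_support_of_nonneg_ae (hpos'.mono fun _ ht => ht.le) (hψ.mono_set hsub),
    measure_congr (s := Function.support ψ) (eventuallyEq_univ.2 (hpos'.mono fun _ ht => ht.ne')),
    Measure.restrict_apply_univ, Real.volume_Icc]
  exact ENNReal.ofReal_pos.2 (sub_pos.2 hxy)

theorem strictMonoOn_primitive (hψ : IntegrableOn ψ (Icc c d))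
    (hpos : ∀ᵐ t ∂volume.restrict (Icc c d), 0 < ψ t) :
    StrictMonoOn (fun x => ∫ t in c..x, ψ t) (Icc c d) := by
  intro x hx y hy hxy
  have := integral_add_adjacent_intervals
    (hψ.intervalIntegrable_of_mem (left_mem_Icc.2 (hx.1.trans hx.2)) hx)
    (hψ.intervalIntegrable_of_mem hx hy)
  linarith [integral_pos_of_ae_pos hψ hpos hx.1 hxy hy.2]

theorem strictAntiOn_primitive_right (hψ : IntegrableOn ψ (Icc c d))
    (hpos : ∀ᵐ t ∂volume.restrict (Icc c d), 0 < ψ t) :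
    StrictAntiOn (fun x => ∫ t in x..d, ψ t) (Icc c d) := by
  intro x hx y hy hxy
  have := integral_add_adjacent_intervals (hψ.intervalIntegrable_of_mem hx hy)
    (hψ.intervalIntegrable_of_mem hy (right_mem_Icc.2 (hy.1.trans hy.2)))
  linarith [integral_pos_of_ae_pos hψ hpos hx.1 hxy hy.2]

end Primitive

/-- `ρ` carries the measure `ψ₁ dt` on `[a, a']` onto `ψ₂ dt` on `[b', b]`, reversing order. -/
structure IsAntitoneTransport (ψ₁ ψ₂ ρ : ℝ → ℝ) (a a' b' b : ℝ) : Prop where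
  left_le : a ≤ a'
  right_le : b' ≤ b
  integrableOn_left : IntegrableOn ψ₁ (Icc a a')
  integrableOn_right : IntegrableOn ψ₂ (Icc b' b)
  nonneg_left : 0 ≤ᵐ[volume.restrict (Icc a a')] ψ₁
  nonneg_right : 0 ≤ᵐ[volume.restrict (Icc b' b)] ψ₂
  strictAntiOn : StrictAntiOn ρ (Icc a a')
  mapsTo : MapsTo ρ (Icc a a') (Icc b' b)
  surjOn : SurjOn ρ (Icc a a') (Icc b' b)
  integral_eq : ∀ s ∈ Icc a a', ∫ t in a..s, ψ₁ t = ∫ t in ρ s..b, ψ₂ t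

theorem isAntitoneTransport_of_ae_pos {ψ₁ ψ₂ ρ : ℝ → ℝ} {a a' b' b : ℝ} (haa' : a ≤ a')
    (hb'b : b' ≤ b) (hψ₁ : IntegrableOn ψ₁ (Icc a a')) (hψ₂ : IntegrableOn ψ₂ (Icc b' b))
    (hpos₁ : ∀ᵐ t ∂volume.restrict (Icc a a'), 0 < ψ₁ t)
    (hpos₂ : ∀ᵐ t ∂volume.restrict (Icc b' b), 0 < ψ₂ t)
    (hint : ∫ t in a..a', ψ₁ t = ∫ t in b'..b, ψ₂ t) (hmaps : MapsTo ρ (Icc a a') (Icc b' b))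
    (hρ : ∀ s ∈ Icc a a', ∫ t in a..s, ψ₁ t = ∫ t in ρ s..b, ψ₂ t) :
    IsAntitoneTransport ψ₁ ψ₂ ρ a a' b' b where
  left_le := haa'
  right_le := hb'b
  integrableOn_left := hψ₁
  integrableOn_right := hψ₂
  nonneg_left := hpos₁.mono fun _ h => h.le
  nonneg_right := hpos₂.mono fun _ h => h.le
  strictAntiOn := by
    intro x hx y hy hxy
    have hΦ := strictMonoOn_primitive hψ₁ hpos₁ hx hy hxy
    simp only [hρ x hx, hρ y hy] at hΦ
    exact (strictAntiOn_primitive_right hψ₂ hpos₂).lt_iff_gt (hmaps hx) (hmaps hy) |>.1 hΦ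
  mapsTo := hmaps
  surjOn := by
    intro t ht
    have hΨ := strictAntiOn_primitive_right hψ₂ hpos₂
    have hΦ : ContinuousOn (fun x => ∫ u in a..x, ψ₁ u) (Icc a a') := by
      have h := continuousOn_primitive_interval (μ := volume) (f := ψ₁) (a := a) (b := a')
      rw [uIcc_of_le haa'] at h
      exact h hψ₁
    have hmem : ∫ u in t..b, ψ₂ u ∈ Icc (∫ u in a..a, ψ₁ u) (∫ u in a..a', ψ₁ u) := by
      rw [integral_same, hint, ← integral_same (a := b) (f := ψ₂)]
      exact ⟨hΨ.antitoneOn ht (right_mem_Icc.2 hb'b) ht.2,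
        hΨ.antitoneOn (left_mem_Icc.2 hb'b) ht ht.1⟩
    obtain ⟨σ, hσ, hΦσ⟩ := intermediate_value_Icc haa' hΦ hmem
    refine ⟨σ, hσ, hΨ.injOn (hmaps hσ) ht ?_⟩
    simp only [← hρ σ hσ, hΦσ]
  integral_eq := hρ

theorem lintegral_Icc_ofReal_eq {f : ℝ → ℝ} {x y : ℝ} (hxy : x ≤ y)
    (hf : IntegrableOn f (Icc x y)) (hnn : 0 ≤ᵐ[volume.restrict (Icc x y)] f) :
    ∫⁻ t in Icc x y, ENNReal.ofReal (f t) = ENNReal.ofReal (∫ t in x..y, f t) := by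
  rw [integral_of_le hxy, ← integral_Icc_eq_integral_Ioc,
    ofReal_integral_eq_lintegral_ofReal hf hnn]

theorem integral_withDensity_ofReal_eq {α : Type*} [MeasurableSpace α] {μ : Measure α}
    {φ : α → ℝ} (hφ : AEMeasurable φ μ) (hnn : 0 ≤ᵐ[μ] φ) (g : α → ℝ) :
    ∫ x, g x ∂μ.withDensity (fun x => ENNReal.ofReal (φ x)) = ∫ x, φ x * g x ∂μ := by
  rw [integral_withDensity_eq_integral_toReal_smul₀ (f := fun x => ENNReal.ofReal (φ x))
    (ENNReal.measurable_ofReal.comp_aemeasurable hφ) (ae_of_all _ fun _ => ENNReal.ofReal_lt_top)]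
  refine integral_congr_ae (hnn.mono fun x hx => ?_)
  simp [ENNReal.toReal_ofReal hx]

namespace IsAntitoneTransport

variable {ψ₁ ψ₂ ρ : ℝ → ℝ} {a a' b' b : ℝ} (hρ : IsAntitoneTransport ψ₁ ψ₂ ρ a a' b' b)
include hρ

theorem continuousOn : ContinuousOn ρ (Icc a a') :=
  hρ.strictAntiOn.continuousOn_of_surjOn_Icc hρ.mapsTo hρ.surjOn

theorem aemeasurable : AEMeasurable ρ (volume.restrict (Icc a a')) :=
  aemeasurable_restrict_of_antitoneOn measurableSet_Icc hρ.strictAntiOn.antitoneOn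

theorem map_withDensity :
    ((volume.restrict (Icc a a')).withDensity fun s => ENNReal.ofReal (ψ₁ s)).map ρ =
      (volume.restrict (Icc b' b)).withDensity fun t => ENNReal.ofReal (ψ₂ t) := by
  have := isFiniteMeasure_withDensity_ofReal hρ.integrableOn_left.hasFiniteIntegral
  refine Measure.ext_of_Ici _ _ fun t => ?_
  -- for `t ≤ b` the preimage of `[t, ∞)` is `[a, σ]` with `ρ σ = max t b'`, and the two masses
  -- are the two sides of `integral_eq σ`
  rw [Measure.map_apply_of_aemeasurable
      (hρ.aemeasurable.mono_ac (withDensity_absolutelyContinuous _ _)) measurableSet_Ici,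
    withDensity_apply', withDensity_apply', Measure.restrict_restrict' measurableSet_Icc,
    Measure.restrict_restrict' measurableSet_Icc]
  rcases le_or_gt t b with htb | hbt
  · obtain ⟨σ, hσ, hρσ⟩ := hρ.surjOn ⟨le_max_right t b', max_le htb hρ.right_le⟩
    have hpre : ρ ⁻¹' Ici t ∩ Icc a a' = Icc a σ := by
      ext s
      simp only [mem_inter_iff, mem_preimage, mem_Ici, mem_Icc]
      constructor
      · rintro ⟨hts, has, hsa'⟩
        refine ⟨has, (hρ.strictAntiOn.le_iff_ge hσ ⟨has, hsa'⟩).1 ?_⟩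
        rw [hρσ]
        exact max_le hts (hρ.mapsTo ⟨has, hsa'⟩).1
      · rintro ⟨has, hsσ⟩
        refine ⟨?_, has, hsσ.trans hσ.2⟩
        calc t ≤ max t b' := le_max_left _ _
          _ = ρ σ := hρσ.symm
          _ ≤ ρ s := hρ.strictAntiOn.antitoneOn ⟨has, hsσ.trans hσ.2⟩ hσ hsσ
    have himg : Ici t ∩ Icc b' b = Icc (ρ σ) b := by
      rw [hρσ]
      ext u
      simp only [mem_inter_iff, mem_Ici, mem_Icc, max_le_iff]
      tauto
    have hσb : Icc (ρ σ) b ⊆ Icc b' b := Icc_subset_Icc (hρ.mapsTo hσ).1 le_rfl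
    have haσ : Icc a σ ⊆ Icc a a' := Icc_subset_Icc le_rfl hσ.2
    rw [hpre, himg, lintegral_Icc_ofReal_eq hσ.1 (hρ.integrableOn_left.mono_set haσ)
        (ae_restrict_of_ae_restrict_of_subset haσ hρ.nonneg_left),
      lintegral_Icc_ofReal_eq (hρ.mapsTo hσ).2 (hρ.integrableOn_right.mono_set hσb)
        (ae_restrict_of_ae_restrict_of_subset hσb hρ.nonneg_right),
      hρ.integral_eq σ hσ]
  · have hpre : ρ ⁻¹' Ici t ∩ Icc a a' = ∅ :=
      eq_empty_of_forall_notMem fun s ⟨hts, hs⟩ => (hbt.trans_le hts).not_ge (hρ.mapsTo hs).2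
    have himg : Ici t ∩ Icc b' b = ∅ :=
      eq_empty_of_forall_notMem fun u ⟨htu, hu⟩ => (hbt.trans_le htu).not_ge hu.2
    simp [hpre, himg]

theorem integral_mul_comp {h : ℝ → ℝ}
    (hh : AEStronglyMeasurable h (volume.restrict (Icc b' b))) :
    ∫ t in b'..b, ψ₂ t * h t = ∫ s in a..a', ψ₁ s * h (ρ s) := by
  have hρμ := hρ.aemeasurable.mono_ac
    (withDensity_absolutelyContinuous _ fun s => ENNReal.ofReal (ψ₁ s))
  have hh' : AEStronglyMeasurable h (((volume.restrict (Icc a a')).withDensity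
      fun s => ENNReal.ofReal (ψ₁ s)).map ρ) := by
    rw [hρ.map_withDensity]
    exact hh.mono_ac (withDensity_absolutelyContinuous _ _)
  rw [integral_of_le hρ.right_le, integral_of_le hρ.left_le, ← integral_Icc_eq_integral_Ioc,
    ← integral_Icc_eq_integral_Ioc,
    ← integral_withDensity_ofReal_eq hρ.integrableOn_right.aemeasurable hρ.nonneg_right,
    ← integral_withDensity_ofReal_eq hρ.integrableOn_left.aemeasurable hρ.nonneg_left,
    ← hρ.map_withDensity, integral_map hρμ hh']

theorem intervalIntegrable_mul {g : ℝ → ℝ} (hg : ContinuousOn g (Icc a a')) :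
    IntervalIntegrable (fun s => ψ₁ s * g s) volume a a' :=
  (intervalIntegrable_iff_integrableOn_Icc_of_le hρ.left_le).2 <|
    hρ.integrableOn_left.mul_continuousOn hg isCompact_Icc

theorem integral_sub_integral {f : ℝ → ℝ} (hf₁ : ContinuousOn f (Icc a a'))
    (hf₂ : ContinuousOn f (Icc b' b)) :
    (∫ t in a..a', ψ₁ t * f t) - ∫ t in b'..b, ψ₂ t * f t =
      ∫ s in a..a', ψ₁ s * (f s - f (ρ s)) := by
  rw [hρ.integral_mul_comp (hf₂.aestronglyMeasurable measurableSet_Icc),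
    ← integral_sub (hρ.intervalIntegrable_mul hf₁)
      (hρ.intervalIntegrable_mul (g := fun s => f (ρ s)) (hf₂.comp hρ.continuousOn hρ.mapsTo))]
  simp only [mul_sub]

theorem sub_mem_Icc (ha'b' : a' ≤ b') {s : ℝ} (hs : s ∈ Icc a a') : ρ s - s ∈ Icc 0 (b - a) :=
  ⟨sub_nonneg.2 (hs.2.trans (ha'b'.trans (hρ.mapsTo hs).1)), sub_le_sub (hρ.mapsTo hs).2 hs.1⟩

theorem continuousOn_comp_sub {φ : ℝ → ℝ} (ha'b' : a' ≤ b')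
    (hφ : ContinuousOn φ (Icc 0 (b - a))) : ContinuousOn (fun s => φ (ρ s - s)) (Icc a a') :=
  hφ.comp (hρ.continuousOn.sub continuousOn_id) fun _ hs => hρ.sub_mem_Icc ha'b' hs

theorem abs_integral_sub_le (ha'b' : a' ≤ b') {ω f : ℝ → ℝ} (hω : IsModulus ω)
    (hf : HHolder ω a b f) :
    |(∫ t in a..a', ψ₁ t * f t) - ∫ t in b'..b, ψ₂ t * f t| ≤
      ∫ s in a..a', ψ₁ s * ω (ρ s - s) := by
  have hsub₁ : Icc a a' ⊆ Icc a b := Icc_subset_Icc le_rfl (ha'b'.trans hρ.right_le)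
  have hsub₂ : Icc b' b ⊆ Icc a b := Icc_subset_Icc (hρ.left_le.trans ha'b') le_rfl
  have hf₁ := (hf.continuousOn hω).mono hsub₁
  have hf₂ := (hf.continuousOn hω).mono hsub₂
  rw [hρ.integral_sub_integral hf₁ hf₂]
  refine (abs_integral_le_integral_abs hρ.left_le).trans (integral_mono_ae_restrict hρ.left_le
    (hρ.intervalIntegrable_mul (hf₁.sub (hf₂.comp hρ.continuousOn hρ.mapsTo))).abs
    (hρ.intervalIntegrable_mul
      (hρ.continuousOn_comp_sub ha'b' (hω.2.1.mono Icc_subset_Ici_self))) ?_)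
  filter_upwards [hρ.nonneg_left, ae_restrict_mem measurableSet_Icc] with s hψs hs
  rw [abs_mul, abs_of_nonneg hψs]
  refine mul_le_mul_of_nonneg_left ?_ hψs
  have := hf s (hsub₁ hs) (ρ s) (hsub₂ (hρ.mapsTo hs))
  rwa [Real.norm_eq_abs, abs_sub_comm, abs_of_nonneg (hρ.sub_mem_Icc ha'b' hs).1] at this

end IsAntitoneTransport

theorem ConcaveOn.map_add_sub_le_map_add_sub {f : ℝ → ℝ} {s : Set ℝ} (hf : ConcaveOn ℝ s f)
    {x y ε : ℝ} (hx : x ∈ s) (hyε : y + ε ∈ s) (hxy : x ≤ y) (hε : 0 ≤ ε) :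
    f (y + ε) - f y ≤ f (x + ε) - f x := by
  rcases hxy.eq_or_lt with rfl | hxy
  · exact le_rfl
  rcases hε.eq_or_lt with rfl | hε
  · simp
  -- `x + ε` and `y` are complementary convex combinations of `x` and `y + ε`
  have hD : 0 < y + ε - x := by linarith
  have hθ : 0 ≤ (y - x) / (y + ε - x) := div_nonneg (sub_nonneg.2 hxy.le) hD.le
  have hθ' : 0 ≤ ε / (y + ε - x) := div_nonneg hε.le hD.le
  have hsum : (y - x) / (y + ε - x) + ε / (y + ε - x) = 1 := by field_simp; ring
  have h₁ := hf.2 hx hyε hθ hθ' hsum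
  have h₂ := hf.2 hx hyε hθ' hθ ((add_comm _ _).trans hsum)
  simp only [smul_eq_mul] at h₁ h₂
  rw [show (y - x) / (y + ε - x) * x + ε / (y + ε - x) * (y + ε) = x + ε by field_simp; ring]
    at h₁
  rw [show ε / (y + ε - x) * x + (y - x) / (y + ε - x) * (y + ε) = y by field_simp; ring] at h₂
  linear_combination h₁ + h₂ - (f x + f (y + ε)) * hsum

theorem integral_increment_comm {f : ℝ → ℝ} (hf : ∀ p q, IntervalIntegrable f volume p q)
    (T ε : ℝ) : ∫ x in (0:ℝ)..T, (f (x + ε) - f x) = ∫ x in (0:ℝ)..ε, (f (x + T) - f x) := by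
  have key : ∀ c d : ℝ, ∫ x in (0:ℝ)..c, (f (x + d) - f x) =
      (∫ x in (0:ℝ)..(c + d), f x) - (∫ x in (0:ℝ)..c, f x) - ∫ x in (0:ℝ)..d, f x := by
    intro c d
    have hshift : IntervalIntegrable (fun x => f (x + d)) volume 0 c := by
      simpa using (hf (0 + d) (c + d)).comp_add_right d
    rw [integral_sub hshift (hf 0 c), integral_comp_add_right, zero_add]
    have := integral_add_adjacent_intervals (hf 0 d) (hf d (c + d))
    have := integral_add_adjacent_intervals (hf 0 c) (hf c (c + d))
    linarith
  rw [key, key, add_comm T ε]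
  ring

/-- The difference quotient of `ω` with step `ε`, extended to `x < 0` by its value at `0` so
that it is antitone on all of `ℝ` when `ω` is concave on `[0, ∞)`. -/
noncomputable def modulusSlope (ω : ℝ → ℝ) (ε x : ℝ) : ℝ :=
  (ω (max x 0 + ε) - ω (max x 0)) / ε

section ModulusSlope

variable {ω : ℝ → ℝ} {ε : ℝ}

theorem antitone_modulusSlope (hconc : ConcaveOn ℝ (Ici 0) ω) (hε : 0 ≤ ε) :
    Antitone (modulusSlope ω ε) := fun x y hxy =>
  div_le_div_of_nonneg_right (hconc.map_add_sub_le_map_add_sub (le_max_right x 0)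
    (mem_Ici.2 (add_nonneg (le_max_right y 0) hε)) (max_le_max_right 0 hxy) hε) hε

theorem modulusSlope_nonneg (hω : MonotoneOn ω (Ici 0)) (hε : 0 ≤ ε) (x : ℝ) :
    0 ≤ modulusSlope ω ε x :=
  div_nonneg (sub_nonneg.2 (hω (le_max_right x 0) (mem_Ici.2 (add_nonneg (le_max_right x 0) hε))
    (le_add_of_nonneg_right hε))) hε

theorem IsModulus.integral_modulusSlope_mem (hω : IsModulus ω) (hε : 0 < ε) {T : ℝ}
    (hT : 0 ≤ T) : ∫ v in (0:ℝ)..T, modulusSlope ω ε v ∈ Icc (ω T - ω ε) (ω T) := by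
  obtain ⟨-, -, hmono, hsub⟩ := hω
  have hΩ : Monotone fun x => ω (max x 0) := fun x y hxy =>
    hmono (le_max_right x 0) (le_max_right y 0) (max_le_max_right 0 hxy)
  have hpos : ∫ δ in (0:ℝ)..ε, (ω (max (δ + T) 0) - ω (max δ 0)) =
      ∫ δ in (0:ℝ)..ε, (ω (δ + T) - ω δ) :=
    integral_congr fun δ hδ => by
      rw [uIcc_of_le hε.le] at hδ
      rw [max_eq_left (add_nonneg hδ.1 hT), max_eq_left hδ.1]
  have hslope : ∫ v in (0:ℝ)..T, modulusSlope ω ε v =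
      (∫ δ in (0:ℝ)..ε, (ω (δ + T) - ω δ)) / ε := by
    rw [← hpos, ← integral_increment_comm (fun _ _ => hΩ.intervalIntegrable),
      ← intervalIntegral.integral_div]
    refine integral_congr fun v hv => ?_
    rw [uIcc_of_le hT] at hv
    simp only [modulusSlope, max_eq_left hv.1, max_eq_left (add_nonneg hv.1 hε.le)]
  have hii : IntervalIntegrable (fun δ => ω (δ + T) - ω δ) volume 0 ε := by
    refine (MonotoneOn.intervalIntegrable ?_).sub (MonotoneOn.intervalIntegrable ?_) <;>
      rw [uIcc_of_le hε.le]
    · exact fun x hx y hy hxy => hmono (add_nonneg hx.1 hT) (add_nonneg hy.1 hT) (by linarith)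
    · exact hmono.mono Icc_subset_Ici_self
  rw [hslope, mem_Icc, le_div_iff₀ hε, div_le_iff₀ hε]
  constructor
  · calc (ω T - ω ε) * ε = ∫ _ in (0:ℝ)..ε, (ω T - ω ε) := by
          rw [intervalIntegral.integral_const, smul_eq_mul, sub_zero, mul_comm]
      _ ≤ _ := integral_mono_on hε.le intervalIntegrable_const hii fun δ hδ => by
        have h₁ := hmono (mem_Ici.2 hT) (mem_Ici.2 (add_nonneg hδ.1 hT))
          (le_add_of_nonneg_left hδ.1)
        have h₂ := hmono (mem_Ici.2 hδ.1) (mem_Ici.2 hε.le) hδ.2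
        linarith
  · calc ∫ δ in (0:ℝ)..ε, (ω (δ + T) - ω δ) ≤ ∫ _ in (0:ℝ)..ε, ω T :=
          integral_mono_on hε.le hii intervalIntegrable_const fun δ hδ => by
            linarith [hsub δ T hδ.1 hT]
      _ = ω T * ε := by rw [intervalIntegral.integral_const, smul_eq_mul, sub_zero, mul_comm]

end ModulusSlope

section Extremal

variable {w ρ : ℝ → ℝ} {a a' : ℝ}

theorem monotone_integral_of_nonneg (hw : Antitone w) (hw0 : ∀ x, 0 ≤ w x) :
    Monotone fun T => ∫ v in (0:ℝ)..T, w v := fun p q hpq => by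
  have := integral_interval_sub_left (hw.intervalIntegrable (μ := volume) (a := 0) (b := q))
    (hw.intervalIntegrable (μ := volume) (b := p))
  linarith [integral_nonneg (μ := volume) hpq fun u _ => hw0 u]

theorem integral_add_le_of_antitone (hw : Antitone w) {p q : ℝ} (hp : 0 ≤ p) (hq : 0 ≤ q) :
    ∫ v in (0:ℝ)..(p + q), w v ≤ (∫ v in (0:ℝ)..p, w v) + ∫ v in (0:ℝ)..q, w v := by
  have hsplit := integral_interval_sub_left
    (hw.intervalIntegrable (μ := volume) (a := 0) (b := p + q))
    (hw.intervalIntegrable (μ := volume) (b := p))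
  have hshift : ∫ v in p..(p + q), w v ≤ ∫ v in (0:ℝ)..q, w v := by
    have := integral_comp_add_right w p (a := 0) (b := q)
    rw [zero_add, add_comm q p] at this
    rw [← this]
    exact integral_mono_on hq (hw.comp_monotone (monotone_id.add_const p)).intervalIntegrable
      hw.intervalIntegrable fun v _ => hw (le_add_of_nonneg_right hp)
  linarith

theorem integral_le_integral_comp_sub (hw : Antitone w) {δ : ℝ → ℝ} {x y z : ℝ} (hxy : x ≤ y)
    (hδ : IntervalIntegrable (fun u => w (δ u)) volume x y) (h : ∀ u ∈ Icc x y, z - u ≤ δ u) :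
    ∫ u in x..y, w (δ u) ≤ (∫ v in (0:ℝ)..(z - x), w v) - ∫ v in (0:ℝ)..(z - y), w v := by
  rw [integral_interval_sub_left hw.intervalIntegrable hw.intervalIntegrable,
    ← integral_comp_sub_left]
  exact integral_mono_on hxy hδ (hw.comp fun _ _ h => sub_le_sub_left h z).intervalIntegrable
    fun u hu => hw (h u hu)

theorem integral_comp_sub_le_integral (hw : Antitone w) {δ : ℝ → ℝ} {x y z : ℝ} (hxy : x ≤ y)
    (hδ : IntervalIntegrable (fun u => w (δ u)) volume x y) (h : ∀ u ∈ Icc x y, δ u ≤ z - u) :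
    (∫ v in (0:ℝ)..(z - x), w v) - (∫ v in (0:ℝ)..(z - y), w v) ≤ ∫ u in x..y, w (δ u) := by
  rw [integral_interval_sub_left hw.intervalIntegrable hw.intervalIntegrable,
    ← integral_comp_sub_left]
  exact integral_mono_on hxy (hw.comp fun _ _ h => sub_le_sub_left h z).intervalIntegrable
    hδ fun u hu => hw (h u hu)

theorem intervalIntegrable_comp_sub (hw : Antitone w) (hρ : AntitoneOn ρ (Icc a a')) {x y : ℝ}
    (hx : x ∈ Icc a a') (hy : y ∈ Icc a a') :
    IntervalIntegrable (fun u => w (ρ u - u)) volume x y :=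
  MonotoneOn.intervalIntegrable <| (hw.comp_antitoneOn fun _ hu _ hv huv =>
    sub_le_sub (hρ hu hv huv) huv).mono (uIcc_subset_Icc hx hy)

noncomputable def extremalCost (w ρ : ℝ → ℝ) (a z s : ℝ) : ℝ :=
  (∫ u in a..s, w (ρ u - u)) + ∫ v in (0:ℝ)..(z - s), w v

noncomputable def extremalFun (w ρ : ℝ → ℝ) (a a' z : ℝ) : ℝ :=
  sInf (extremalCost w ρ a z '' Icc a (min z a'))

theorem extremalCost_le_of_le (hw : Antitone w) (hρ : AntitoneOn ρ (Icc a a')) {s s' z : ℝ}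
    (hs' : s' ∈ Icc a a') (hs : s ∈ Icc a a') (hs's : s' ≤ s) (hz : ∀ u ∈ Icc s' s, z ≤ ρ u) :
    extremalCost w ρ a z s ≤ extremalCost w ρ a z s' := by
  have ha : a ∈ Icc a a' := left_mem_Icc.2 (hs.1.trans hs.2)
  have hsplit := integral_interval_sub_left (intervalIntegrable_comp_sub hw hρ ha hs)
    (intervalIntegrable_comp_sub hw hρ ha hs')
  have := integral_le_integral_comp_sub hw hs's (intervalIntegrable_comp_sub hw hρ hs' hs)
    fun u hu => sub_le_sub_right (hz u hu) u
  unfold extremalCost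
  linarith

theorem extremalCost_le_of_ge (hw : Antitone w) (hρ : AntitoneOn ρ (Icc a a')) {s s' z : ℝ}
    (hs : s ∈ Icc a a') (hs' : s' ∈ Icc a a') (hss' : s ≤ s') (hz : ∀ u ∈ Icc s s', ρ u ≤ z) :
    extremalCost w ρ a z s ≤ extremalCost w ρ a z s' := by
  have ha : a ∈ Icc a a' := left_mem_Icc.2 (hs.1.trans hs.2)
  have hsplit := integral_interval_sub_left (intervalIntegrable_comp_sub hw hρ ha hs')
    (intervalIntegrable_comp_sub hw hρ ha hs)
  have := integral_comp_sub_le_integral hw hss' (intervalIntegrable_comp_sub hw hρ hs hs')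
    fun u hu => sub_le_sub_right (hz u hu) u
  unfold extremalCost
  linarith

theorem bddBelow_extremalCost (hw0 : ∀ x, 0 ≤ w x) (z : ℝ) :
    BddBelow (extremalCost w ρ a z '' Icc a (min z a')) := by
  refine ⟨0, ?_⟩
  rintro _ ⟨s, hs, rfl⟩
  exact add_nonneg (integral_nonneg hs.1 fun u _ => hw0 _)
    (integral_nonneg (sub_nonneg.2 (hs.2.trans (min_le_left _ _))) fun u _ => hw0 _)

theorem extremalFun_eq (hw : Antitone w) (hρ : AntitoneOn ρ (Icc a a'))
    (hρa' : MapsTo ρ (Icc a a') (Ici a')) {s : ℝ} (hs : s ∈ Icc a a') :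
    extremalFun w ρ a a' s = ∫ u in a..s, w (ρ u - u) := by
  have hleast : IsLeast (extremalCost w ρ a s '' Icc a (min s a')) (extremalCost w ρ a s s) := by
    refine ⟨⟨s, ⟨hs.1, le_min le_rfl hs.2⟩, rfl⟩, ?_⟩
    rintro _ ⟨s', hs', rfl⟩
    have hs's : s' ≤ s := hs'.2.trans (min_le_left _ _)
    exact extremalCost_le_of_le hw hρ ⟨hs'.1, hs's.trans hs.2⟩ hs hs's
      fun u hu => hs.2.trans (hρa' ⟨hs'.1.trans hu.1, hu.2.trans hs.2⟩)
  rw [extremalFun, hleast.csInf_eq, extremalCost, sub_self, integral_same, add_zero]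

theorem extremalFun_apply (hw : Antitone w) (hρ : AntitoneOn ρ (Icc a a'))
    (hρa' : MapsTo ρ (Icc a a') (Ici a')) {s : ℝ} (hs : s ∈ Icc a a') :
    extremalFun w ρ a a' (ρ s) =
      (∫ u in a..s, w (ρ u - u)) + ∫ v in (0:ℝ)..(ρ s - s), w v := by
  have hleast : IsLeast (extremalCost w ρ a (ρ s) '' Icc a a') (extremalCost w ρ a (ρ s) s) := by
    refine ⟨⟨s, hs, rfl⟩, ?_⟩
    rintro _ ⟨s', hs', rfl⟩
    rcases le_total s' s with hs's | hss'
    · exact extremalCost_le_of_le hw hρ hs' hs hs's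
        fun u hu => hρ ⟨hs'.1.trans hu.1, hu.2.trans hs.2⟩ hs hu.2
    · exact extremalCost_le_of_ge hw hρ hs hs' hss'
        fun u hu => hρ hs ⟨hs.1.trans hu.1, hu.2.trans hs'.2⟩ hu.1
  rw [extremalFun, min_eq_right (hρa' hs), hleast.csInf_eq, extremalCost]

theorem extremalFun_le_add (hw : Antitone w) (hw0 : ∀ x, 0 ≤ w x) (ha : a ≤ a') {x y : ℝ}
    (hx : a ≤ x) (hxy : x ≤ y) :
    extremalFun w ρ a a' y ≤ extremalFun w ρ a a' x + ∫ v in (0:ℝ)..(y - x), w v := by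
  rw [← sub_le_iff_le_add]
  refine le_csInf ⟨_, a, ⟨le_rfl, le_min hx ha⟩, rfl⟩ ?_
  rintro _ ⟨s, hs, rfl⟩
  have hW := integral_add_le_of_antitone hw (sub_nonneg.2 (hs.2.trans (min_le_left _ _)))
    (sub_nonneg.2 hxy)
  rw [sub_add_sub_cancel'] at hW
  have hGy := csInf_le (bddBelow_extremalCost (ρ := ρ) hw0 y)
    ⟨s, ⟨hs.1, hs.2.trans (min_le_min_right _ hxy)⟩, rfl⟩
  unfold extremalFun
  unfold extremalCost at hGy ⊢
  linarith

theorem extremalFun_mono (hw : Antitone w) (hw0 : ∀ x, 0 ≤ w x) (hρ : AntitoneOn ρ (Icc a a'))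
    (hρa' : MapsTo ρ (Icc a a') (Ici a')) (ha : a ≤ a') {x y : ℝ} (hx : a ≤ x) (hxy : x ≤ y) :
    extremalFun w ρ a a' x ≤ extremalFun w ρ a a' y := by
  refine le_csInf ⟨_, a, ⟨le_rfl, le_min (hx.trans hxy) ha⟩, rfl⟩ ?_
  rintro _ ⟨s, hs, rfl⟩
  have hsa' : s ≤ a' := hs.2.trans (min_le_right _ _)
  have hWys : 0 ≤ ∫ v in (0:ℝ)..(y - s), w v :=
    integral_nonneg (sub_nonneg.2 (hs.2.trans (min_le_left _ _))) fun u _ => hw0 u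
  rcases le_or_gt s x with hsx | hxs
  · refine (csInf_le (bddBelow_extremalCost hw0 x) ⟨s, ⟨hs.1, le_min hsx hsa'⟩, rfl⟩).trans ?_
    exact add_le_add_right (monotone_integral_of_nonneg hw hw0 (sub_le_sub_right hxy s)) _
  · have hxI : x ∈ Icc a a' := ⟨hx, hxs.le.trans hsa'⟩
    have hsplit := integral_interval_sub_left
      (intervalIntegrable_comp_sub hw hρ (left_mem_Icc.2 ha) ⟨hs.1, hsa'⟩)
      (intervalIntegrable_comp_sub hw hρ (left_mem_Icc.2 ha) hxI)
    have hxs' : 0 ≤ ∫ u in x..s, w (ρ u - u) := integral_nonneg hxs.le fun u _ => hw0 _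
    rw [extremalFun_eq hw hρ hρa' hxI, extremalCost]
    linarith

theorem abs_extremalFun_sub_le (hw : Antitone w) (hw0 : ∀ x, 0 ≤ w x)
    (hρ : AntitoneOn ρ (Icc a a')) (hρa' : MapsTo ρ (Icc a a') (Ici a')) (ha : a ≤ a') {x y : ℝ}
    (hx : a ≤ x) (hy : a ≤ y) :
    |extremalFun w ρ a a' y - extremalFun w ρ a a' x| ≤ ∫ v in (0:ℝ)..|y - x|, w v := by
  wlog hxy : x ≤ y generalizing x y
  · rw [abs_sub_comm, abs_sub_comm y]
    exact this hy hx (le_of_not_ge hxy)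
  rw [abs_of_nonneg (sub_nonneg.2 (extremalFun_mono hw hw0 hρ hρa' ha hx hxy)),
    abs_of_nonneg (sub_nonneg.2 hxy)]
  linarith [extremalFun_le_add (ρ := ρ) hw hw0 ha hx hxy]

theorem hHolder_extremalFun_modulusSlope {ω : ℝ → ℝ} (hω : IsModulus ω)
    (hconc : ConcaveOn ℝ (Ici 0) ω) {ε : ℝ} (hε : 0 < ε) (hρ : AntitoneOn ρ (Icc a a'))
    (hρa' : MapsTo ρ (Icc a a') (Ici a')) (ha : a ≤ a') (b : ℝ) :
    HHolder ω a b (extremalFun (modulusSlope ω ε) ρ a a') := fun x hx y hy => by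
  rw [Real.norm_eq_abs]
  exact (abs_extremalFun_sub_le (antitone_modulusSlope hconc hε.le)
    (modulusSlope_nonneg hω.2.2.1 hε.le) hρ hρa' ha hx.1 hy.1).trans
    (hω.integral_modulusSlope_mem hε (abs_nonneg _)).2

end Extremal

namespace IsAntitoneTransport

variable {ψ₁ ψ₂ ρ : ℝ → ℝ} {a a' b' b : ℝ} (hρ : IsAntitoneTransport ψ₁ ψ₂ ρ a a' b' b)
include hρ

theorem exists_le_abs_integral_sub (ha'b' : a' ≤ b') {ω : ℝ → ℝ} (hω : IsModulus ω)
    (hconc : ConcaveOn ℝ (Ici 0) ω) {ε : ℝ} (hε : 0 < ε) :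
    ∃ f, HHolder ω a b f ∧ (∫ s in a..a', ψ₁ s * ω (ρ s - s)) - (∫ s in a..a', ψ₁ s) * ω ε ≤
      |(∫ t in a..a', ψ₁ t * f t) - ∫ t in b'..b, ψ₂ t * f t| := by
  set w := modulusSlope ω ε
  have hw : Antitone w := antitone_modulusSlope hconc hε.le
  have hanti := hρ.strictAntiOn.antitoneOn
  have hρa' : MapsTo ρ (Icc a a') (Ici a') := fun s hs => ha'b'.trans (hρ.mapsTo hs).1
  set G := extremalFun w ρ a a'
  have hG : HHolder ω a b G :=
    hHolder_extremalFun_modulusSlope hω hconc hε hanti hρa' hρ.left_le b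
  refine ⟨G, hG, ?_⟩
  have hGc := hG.continuousOn hω
  have hWc : Continuous fun T => ∫ v in (0:ℝ)..T, w v :=
    continuous_primitive (fun _ _ => hw.intervalIntegrable) 0
  have hdiff : ∫ s in a..a', ψ₁ s * (G s - G (ρ s)) =
      -∫ s in a..a', ψ₁ s * ∫ v in (0:ℝ)..(ρ s - s), w v := by
    rw [← intervalIntegral.integral_neg]
    refine integral_congr fun s hs => ?_
    rw [uIcc_of_le hρ.left_le] at hs
    simp only [G, extremalFun_eq hw hanti hρa' hs, extremalFun_apply hw hanti hρa' hs]
    ring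
  rw [hρ.integral_sub_integral (hGc.mono (Icc_subset_Icc le_rfl (ha'b'.trans hρ.right_le)))
    (hGc.mono (Icc_subset_Icc (hρ.left_le.trans ha'b') le_rfl)), hdiff, abs_neg]
  refine le_trans ?_ (le_abs_self _)
  have hωρ := hρ.intervalIntegrable_mul
    (hρ.continuousOn_comp_sub ha'b' (hω.2.1.mono Icc_subset_Ici_self))
  have hψ := hρ.intervalIntegrable_mul (g := fun _ => ω ε) continuousOn_const
  rw [← intervalIntegral.integral_mul_const, ← integral_sub hωρ hψ]
  refine integral_mono_ae_restrict hρ.left_le (hωρ.sub hψ)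
    (hρ.intervalIntegrable_mul (hρ.continuousOn_comp_sub ha'b' hWc.continuousOn)) ?_
  filter_upwards [hρ.nonneg_left, ae_restrict_mem measurableSet_Icc] with s hψs hs
  have := (hω.integral_modulusSlope_mem hε (hρ.sub_mem_Icc ha'b' hs).1).1
  rw [← mul_sub]
  exact mul_le_mul_of_nonneg_left (by linarith) hψs

theorem exists_lt_abs_integral_sub (ha'b' : a' ≤ b') {ω : ℝ → ℝ} (hω : IsModulus ω)
    (hconc : ConcaveOn ℝ (Ici 0) ω) {v : ℝ} (hv : v < ∫ s in a..a', ψ₁ s * ω (ρ s - s)) :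
    ∃ f, HHolder ω a b f ∧ v < |(∫ t in a..a', ψ₁ t * f t) - ∫ t in b'..b, ψ₂ t * f t| := by
  have hlim : Tendsto (fun ε => (∫ s in a..a', ψ₁ s) * ω ε) (𝓝[>] 0) (𝓝 0) := by
    simpa using (hω.tendsto_zero.mono_left (nhdsWithin_mono _ Ioi_subset_Ici_self)).const_mul
      (∫ s in a..a', ψ₁ s)
  obtain ⟨ε, hεv, hε⟩ :=
    ((hlim.eventually (gt_mem_nhds (sub_pos.2 hv))).and self_mem_nhdsWithin).exists
  obtain ⟨f, hf, hle⟩ := hρ.exists_le_abs_integral_sub ha'b' hω hconc hε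
  exact ⟨f, hf, by linarith⟩

end IsAntitoneTransport

/-- Korneichuk–Stechkin lemma, sharpness for concave moduli of continuity (real-valued case):
the supremum over `f ∈ H^ω([a,b],ℝ)` of
`|∫_a^{a'} ψ₁ f − ∫_{b'}^{b} ψ₂ f|` equals `∫_a^{a'} ψ₁(s) ω(ρ(s) − s) ds`. -/
theorem korneichuk_stechkin_sharp
    (a a' b' b : ℝ) (haa' : a < a') (ha'b' : a' ≤ b') (hb'b : b' < b)
    (ψ₁ ψ₂ : ℝ → ℝ) (hm₁ : Measurable ψ₁) (hm₂ : Measurable ψ₂)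
    (hbd₁ : ∃ C, ∀ t ∈ Set.Icc a a', |ψ₁ t| ≤ C)
    (hbd₂ : ∃ C, ∀ t ∈ Set.Icc b' b, |ψ₂ t| ≤ C)
    (hpos₁ : ∀ᵐ t ∂(volume.restrict (Set.Icc a a')), 0 < ψ₁ t)
    (hpos₂ : ∀ᵐ t ∂(volume.restrict (Set.Icc b' b)), 0 < ψ₂ t)
    (hint : ∫ t in a..a', ψ₁ t = ∫ t in b'..b, ψ₂ t)
    (ρ : ℝ → ℝ) (hρmap : Set.MapsTo ρ (Set.Icc a a') (Set.Icc b' b))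
    (hρ : ∀ s ∈ Set.Icc a a', ∫ t in a..s, ψ₁ t = ∫ t in ρ s..b, ψ₂ t)
    (ω : ℝ → ℝ) (hω : IsModulus ω) (hconc : ConcaveOn ℝ (Set.Ici 0) ω) :
    sSup {v : ℝ | ∃ f : ℝ → ℝ, HHolder ω a b f ∧
        v = |(∫ t in a..a', ψ₁ t * f t) - ∫ t in b'..b, ψ₂ t * f t|} =
      ∫ s in a..a', ψ₁ s * ω (ρ s - s) := by
  obtain ⟨C₁, hC₁⟩ := hbd₁
  obtain ⟨C₂, hC₂⟩ := hbd₂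
  have hT : IsAntitoneTransport ψ₁ ψ₂ ρ a a' b' b :=
    isAntitoneTransport_of_ae_pos haa'.le hb'b.le (integrableOn_Icc_of_abs_le hm₁ hC₁)
      (integrableOn_Icc_of_abs_le hm₂ hC₂) hpos₁ hpos₂ hint hρmap hρ
  refine csSup_eq_of_forall_le_of_forall_lt_exists_gt ?_ ?_ fun v hv => ?_
  · obtain ⟨f, hf, -⟩ := hT.exists_le_abs_integral_sub ha'b' hω hconc one_pos
    exact ⟨_, f, hf, rfl⟩
  · rintro _ ⟨f, hf, rfl⟩
    exact hT.abs_integral_sub_le ha'b' hω hf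
  · obtain ⟨f, hf, hlt⟩ := hT.exists_lt_abs_integral_sub ha'b' hω hconc hv
    exact ⟨_, ⟨f, hf, rfl⟩, hlt⟩
end

section
/- Sharp Ostrowski-type inequality for a symmetric pair of values: Let a < b and a ≤ t < (a+b)/2. Then for every modulus of continuity ω, every real Banach space E, and every f ∈ H^ω([a,b],E), ‖(1/2)(f(t) + f(a+b−t)) − (1/(b−a))∫_a^b f(u) du‖ ≤ (2/(b−a))·( ∫_0^{t−a} ω(u) du + ∫_0^{(a+b−2t)/2} ω(u) du ). Moreover, for any unit vector x ∈ E the function f(u) = min{ω(|u−t|), ω(|u+t−a−b|)}·x turns the inequality into equality. -/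
open MeasureTheory Set

/-!
Split `[a, b]` at its midpoint `c` and put `s = a + b - t`. Then
`½ (f t + f s) - (b - a)⁻¹ ∫_a^b f = (b - a)⁻¹ (∫_a^c (f t - f u) du + ∫_c^b (f s - f u) du)`,
and `‖f t - f u‖ ≤ ω |u - t|`, `‖f s - f u‖ ≤ ω |u - s|` bound the two integrals by integrals of
`ω` over `[0, t - a]` and `[0, c - t]`, the pieces into which `t` cuts `[a, c]` (and `s` cuts
`[c, b]`). Every point of `[a, c]` is at least as close to `t` as to `s`, and symmetrically on
`[c, b]`, so for `g u = min (ω |u - t|) (ω |u - s|)` both bounds are attained, while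
`g t = g s = 0`.
-/

open Filter Topology intervalIntegral

theorem abs_sub_le_abs_sub_of_two_mul_le {t s u : ℝ} (hts : t ≤ s) (hu : 2 * u ≤ t + s) :
    |u - t| ≤ |u - s| := by
  rw [abs_of_nonpos (a := u - s) (by linarith), abs_le]
  constructor <;> linarith

namespace IsModulus

variable {ω : ℝ → ℝ}

theorem nonneg (hω : IsModulus ω) {y : ℝ} (hy : 0 ≤ y) : 0 ≤ ω y := by
  simpa only [hω.1] using hω.2.2.1 self_mem_Ici hy hy

theorem continuous_comp_abs_sub (hω : IsModulus ω) (q : ℝ) : Continuous fun u => ω |u - q| :=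
  hω.2.1.comp_continuous (by fun_prop) fun _ => mem_Ici.2 (abs_nonneg _)

theorem integral_nonneg (hω : IsModulus ω) {y : ℝ} (hy : 0 ≤ y) : 0 ≤ ∫ u in (0 : ℝ)..y, ω u :=
  intervalIntegral.integral_nonneg hy fun _ hu => hω.nonneg hu.1

theorem integral_comp_abs_sub (hω : IsModulus ω) {p q r : ℝ} (hpq : p ≤ q) (hqr : q ≤ r) :
    ∫ u in p..r, ω |u - q| = (∫ u in (0 : ℝ)..(q - p), ω u) + ∫ u in (0 : ℝ)..(r - q), ω u := by
  have hint := (hω.continuous_comp_abs_sub q).intervalIntegrable (μ := volume)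
  rw [← integral_add_adjacent_intervals (hint p q) (hint q r)]
  have hleft : ∫ u in p..q, ω |u - q| = ∫ u in p..q, ω (q - u) :=
    integral_congr fun u hu => by
      rw [uIcc_of_le hpq] at hu
      simp only [abs_of_nonpos (sub_nonpos.2 hu.2), neg_sub]
  have hright : ∫ u in q..r, ω |u - q| = ∫ u in q..r, ω (u - q) :=
    integral_congr fun u hu => by
      rw [uIcc_of_le hqr] at hu
      simp only [abs_of_nonneg (sub_nonneg.2 hu.1)]
  rw [hleft, hright, integral_comp_sub_left, integral_comp_sub_right, sub_self]

theorem integral_comp_abs_sub_symmetric_pair (hω : IsModulus ω) {a b t : ℝ} (hat : a ≤ t)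
    (ht : t ≤ (a + b) / 2) :
    (∫ u in a..(a + b) / 2, ω |u - t|) + ∫ u in (a + b) / 2..b, ω |u - (a + b - t)| =
      2 * ((∫ u in (0 : ℝ)..(t - a), ω u) + ∫ u in (0 : ℝ)..((a + b - 2 * t) / 2), ω u) := by
  rw [hω.integral_comp_abs_sub hat ht, hω.integral_comp_abs_sub (by linarith) (by linarith),
    show (a + b) / 2 - t = (a + b - 2 * t) / 2 by ring,
    show a + b - t - (a + b) / 2 = (a + b - 2 * t) / 2 by ring,
    show b - (a + b - t) = t - a by ring]
  ring

theorem min_comp_abs_sub_eq_left (hω : IsModulus ω) {t s u : ℝ} (hts : t ≤ s)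
    (hu : 2 * u ≤ t + s) : min (ω |u - t|) (ω |u - s|) = ω |u - t| :=
  min_eq_left <| hω.2.2.1 (mem_Ici.2 (abs_nonneg _)) (mem_Ici.2 (abs_nonneg _))
    (abs_sub_le_abs_sub_of_two_mul_le hts hu)

theorem min_comp_abs_sub_eq_right (hω : IsModulus ω) {t s u : ℝ} (hts : t ≤ s)
    (hu : t + s ≤ 2 * u) : min (ω |u - t|) (ω |u - s|) = ω |u - s| := by
  have hclose : |u - s| ≤ |u - t| := by
    simpa only [abs_sub_comm, neg_sub_neg] using
      abs_sub_le_abs_sub_of_two_mul_le (u := -u) (neg_le_neg hts) (by linarith)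
  exact min_eq_right <| hω.2.2.1 (mem_Ici.2 (abs_nonneg _)) (mem_Ici.2 (abs_nonneg _)) hclose

theorem integral_min_comp_abs_sub_symmetric_pair (hω : IsModulus ω) {a b t : ℝ}
    (hat : a ≤ t) (ht : t ≤ (a + b) / 2) :
    ∫ u in a..b, min (ω |u - t|) (ω |u + t - a - b|) =
      (∫ u in a..(a + b) / 2, ω |u - t|) + ∫ u in (a + b) / 2..b, ω |u - (a + b - t)| := by
  have hreflect (u : ℝ) : u + t - a - b = u - (a + b - t) := by ring
  simp only [hreflect]
  have hts : t ≤ a + b - t := by linarith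
  have hint := ((hω.continuous_comp_abs_sub t).min
    (hω.continuous_comp_abs_sub (a + b - t))).intervalIntegrable (μ := volume)
  rw [← integral_add_adjacent_intervals (hint a ((a + b) / 2)) (hint _ b)]
  congr 1
  · refine integral_congr fun u hu => hω.min_comp_abs_sub_eq_left hts ?_
    rw [uIcc_of_le (by linarith)] at hu
    linarith [hu.2]
  · refine integral_congr fun u hu => hω.min_comp_abs_sub_eq_right hts ?_
    rw [uIcc_of_le (by linarith)] at hu
    linarith [hu.1]

end IsModulus

theorem half_smul_add_sub_average_eq {E : Type*} [NormedAddCommGroup E] [NormedSpace ℝ E]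
    [CompleteSpace E] {f : ℝ → E} {a b : ℝ} (hab : a ≠ b) (hf₁ : IntervalIntegrable f volume a ((a + b) / 2))
    (hf₂ : IntervalIntegrable f volume ((a + b) / 2) b) (x y : E) :
    (1 / 2 : ℝ) • (x + y) - (b - a)⁻¹ • ∫ u in a..b, f u =
      (b - a)⁻¹ • ((∫ u in a..(a + b) / 2, (x - f u)) + ∫ u in (a + b) / 2..b, (y - f u)) := by
  have hba : b - a ≠ 0 := sub_ne_zero.2 hab.symm
  rw [integral_sub intervalIntegrable_const hf₁, integral_sub intervalIntegrable_const hf₂,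
    intervalIntegral.integral_const, intervalIntegral.integral_const, ← integral_add_adjacent_intervals hf₁ hf₂]
  match_scalars <;> field_simp <;> ring

namespace HHolder

variable {E : Type*} [NormedAddCommGroup E] {ω : ℝ → ℝ} {a b : ℝ} {f : ℝ → E}

theorem continuousOn_s7 (hω : IsModulus ω) (hf : HHolder ω a b f) : ContinuousOn f (Icc a b) := by
  intro u hu
  rw [ContinuousWithinAt, tendsto_iff_norm_sub_tendsto_zero]
  have hω₀ : Tendsto (fun v => ω |v - u|) (𝓝[Icc a b] u) (𝓝 0) := by
    simpa only [sub_self, abs_zero, hω.1] using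
      ((hω.continuous_comp_abs_sub u).tendsto u).mono_left nhdsWithin_le_nhds
  exact squeeze_zero' (Eventually.of_forall fun _ => norm_nonneg _)
    (eventually_nhdsWithin_of_forall fun v hv => hf u hu v hv) hω₀

theorem intervalIntegrable (hω : IsModulus ω) (hf : HHolder ω a b f) {p r : ℝ}
    (hp : p ∈ Icc a b) (hr : r ∈ Icc a b) : IntervalIntegrable f volume p r :=
  ((hf.continuousOn_s7 hω).mono (uIcc_subset_Icc hp hr)).intervalIntegrable

theorem norm_integral_sub_le [NormedSpace ℝ E] (hω : IsModulus ω) (hf : HHolder ω a b f) {p q r : ℝ}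
    (hp : a ≤ p) (hpr : p ≤ r) (hr : r ≤ b) (hq : q ∈ Icc a b) :
    ‖∫ u in p..r, (f q - f u)‖ ≤ ∫ u in p..r, ω |u - q| := by
  refine norm_integral_le_of_norm_le hpr (Eventually.of_forall fun u hu => ?_)
    ((hω.continuous_comp_abs_sub q).intervalIntegrable _ _)
  rw [abs_sub_comm]
  exact hf u ⟨by linarith [hu.1], by linarith [hu.2]⟩ q hq

theorem norm_symmetric_pair_sub_average_le [NormedSpace ℝ E] [CompleteSpace E]
    (hω : IsModulus ω) (hf : HHolder ω a b f) (hab : a < b) {t : ℝ} (hat : a ≤ t)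
    (ht : t ≤ (a + b) / 2) :
    ‖(1 / 2 : ℝ) • (f t + f (a + b - t)) - (b - a)⁻¹ • ∫ u in a..b, f u‖ ≤
      (2 / (b - a)) *
        ((∫ u in (0 : ℝ)..(t - a), ω u) + ∫ u in (0 : ℝ)..((a + b - 2 * t) / 2), ω u) := by
  have ha : a ∈ Icc a b := left_mem_Icc.2 hab.le
  have hb : b ∈ Icc a b := right_mem_Icc.2 hab.le
  have hc : (a + b) / 2 ∈ Icc a b := ⟨by linarith, by linarith⟩
  have hmem_t : t ∈ Icc a b := ⟨hat, by linarith⟩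
  have hmem_s : a + b - t ∈ Icc a b := ⟨by linarith, by linarith⟩
  rw [half_smul_add_sub_average_eq hab.ne (hf.intervalIntegrable hω ha hc)
    (hf.intervalIntegrable hω hc hb)]
  calc _ ≤ (b - a)⁻¹ *
        ((∫ u in a..(a + b) / 2, ω |u - t|) + ∫ u in (a + b) / 2..b, ω |u - (a + b - t)|) := by
        rw [norm_smul, Real.norm_of_nonneg (inv_nonneg.2 (sub_nonneg.2 hab.le))]
        gcongr
        exact (norm_add_le _ _).trans <| add_le_add
          (hf.norm_integral_sub_le hω le_rfl hc.1 hc.2 hmem_t)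
          (hf.norm_integral_sub_le hω hc.1 hc.2 le_rfl hmem_s)
    _ = _ := by
        rw [hω.integral_comp_abs_sub_symmetric_pair hat ht]
        ring

end HHolder

theorem IsModulus.norm_symmetric_pair_sub_average_min_eq {E : Type*} [NormedAddCommGroup E]
    [NormedSpace ℝ E] [CompleteSpace E] {ω : ℝ → ℝ} (hω : IsModulus ω) {a b t : ℝ} (hat : a ≤ t)
    (ht : t ≤ (a + b) / 2) {x : E} (hx : ‖x‖ = 1) :
    ‖(1 / 2 : ℝ) •
          ((min (ω |t - t|) (ω |t + t - a - b|)) • x +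
            (min (ω |a + b - t - t|) (ω |(a + b - t) + t - a - b|)) • x) -
        (b - a)⁻¹ • ∫ u in a..b, (min (ω |u - t|) (ω |u + t - a - b|)) • x‖ =
      (2 / (b - a)) *
        ((∫ u in (0:ℝ)..(t - a), ω u) + ∫ u in (0:ℝ)..((a + b - 2 * t) / 2), ω u) := by
  have hvanish_t : min (ω |t - t|) (ω |t + t - a - b|) = 0 := by
    rw [sub_self, abs_zero, hω.1]
    exact min_eq_left (hω.nonneg (abs_nonneg _))
  have hvanish_s : min (ω |a + b - t - t|) (ω |(a + b - t) + t - a - b|) = 0 := by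
    rw [show a + b - t + t - a - b = 0 by ring, abs_zero, hω.1]
    exact min_eq_right (hω.nonneg (abs_nonneg _))
  have hnonneg : 0 ≤ (b - a)⁻¹ *
      (2 * ((∫ u in (0:ℝ)..(t - a), ω u) + ∫ u in (0:ℝ)..((a + b - 2 * t) / 2), ω u)) := by
    have := hω.integral_nonneg (sub_nonneg.2 hat)
    have := hω.integral_nonneg (y := (a + b - 2 * t) / 2) (by linarith)
    have : 0 ≤ (b - a)⁻¹ := inv_nonneg.2 (by linarith)
    positivity
  rw [hvanish_t, hvanish_s, zero_smul, add_zero, smul_zero, zero_sub, norm_neg,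
    intervalIntegral.integral_smul_const, smul_smul, norm_smul, hx, mul_one,
    hω.integral_min_comp_abs_sub_symmetric_pair hat ht,
    hω.integral_comp_abs_sub_symmetric_pair hat ht, Real.norm_of_nonneg hnonneg]
  ring

/-- Sharp Ostrowski-type inequality for a symmetric pair of values of `f ∈ H^ω([a,b],E)`,
together with sharpness. -/
theorem ostrowski_symmetric_pair_sharp
    {E : Type*} [NormedAddCommGroup E] [NormedSpace ℝ E] [CompleteSpace E]
    (a b t : ℝ) (hab : a < b) (hat : a ≤ t) (ht : t < (a + b) / 2)
    (ω : ℝ → ℝ) (hω : IsModulus ω) :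
    (∀ f : ℝ → E, HHolder ω a b f →
        ‖(1 / 2 : ℝ) • (f t + f (a + b - t)) - (b - a)⁻¹ • ∫ u in a..b, f u‖ ≤
          (2 / (b - a)) *
            ((∫ u in (0:ℝ)..(t - a), ω u) + ∫ u in (0:ℝ)..((a + b - 2 * t) / 2), ω u)) ∧
      ∀ x : E, ‖x‖ = 1 →
        ‖(1 / 2 : ℝ) •
              ((min (ω |t - t|) (ω |t + t - a - b|)) • x +
                (min (ω |a + b - t - t|) (ω |(a + b - t) + t - a - b|)) • x) -
            (b - a)⁻¹ • ∫ u in a..b, (min (ω |u - t|) (ω |u + t - a - b|)) • x‖ =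
          (2 / (b - a)) *
            ((∫ u in (0:ℝ)..(t - a), ω u) + ∫ u in (0:ℝ)..((a + b - 2 * t) / 2), ω u) :=
  ⟨fun _ hf => hf.norm_symmetric_pair_sub_average_le hω hab hat ht.le,
    fun _ hx => hω.norm_symmetric_pair_sub_average_min_eq hat ht.le hx⟩
end
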